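/- The model space is k-timelike higher order Jordan Osserman for s + 2 ≤ k ≤ 2s: if X_1, …, X_k and Y_1, …, Y_k are two families in ℝ^{3s} with g(X_a, X_b) = −δ_{ab} and g(Y_a, Y_b) = −δ_{ab} for 1 ≤ a, b ≤ k, then the operators J(X_1) + … + J(X_k) and J(Y_1) + … + J(Y_k) are similar, i.e. conjugate by an invertible linear map of ℝ^{3s}. -/
import Mathlib


open scoped BigOperators

noncomputable section

/-- Index type for `ℝ^{3s}`: the first block indexes `U_1,…,U_s`, the second block
`T_1,…,T_s`, the third block `V_1,…,V_s`. -/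
abbrev Ix (s : ℕ) := Fin s ⊕ Fin s ⊕ Fin s

/-- The vector space `ℝ^{3s}`. -/
abbrev Vc (s : ℕ) := Ix s → ℝ

def uI {s : ℕ} (i : Fin s) : Ix s := Sum.inl i
def tI {s : ℕ} (i : Fin s) : Ix s := Sum.inr (Sum.inl i)
def vI {s : ℕ} (i : Fin s) : Ix s := Sum.inr (Sum.inr i)

/-- The standard basis vector `U_i`. -/
def Uv {s : ℕ} (i : Fin s) : Vc s := Pi.single (uI i) 1
/-- The standard basis vector `T_i`. -/
def Tv {s : ℕ} (i : Fin s) : Vc s := Pi.single (tI i) 1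
/-- The standard basis vector `V_i`. -/
def Vv {s : ℕ} (i : Fin s) : Vc s := Pi.single (vI i) 1

/-- The symmetric bilinear form `g` on `ℝ^{3s}` whose only nonzero values on the
standard basis vectors are `g(U_i,V_i) = g(V_i,U_i) = 1` and `g(T_i,T_i) = -1`. -/
def gM (s : ℕ) (x y : Vc s) : ℝ :=
  ∑ i, (x (uI i) * y (vI i) + x (vI i) * y (uI i) - x (tI i) * y (tI i))

/-- The 4-linear form `R` on `ℝ^{3s}` determined by the `ℤ₂`-symmetries
`R(x,y,z,w) = R(z,w,x,y) = -R(y,x,z,w)` and whose nonzero values on the standard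
basis vectors, up to those symmetries, are `R(U_i,U_j,U_j,T_i) = 1` for `i ≠ j`.
(The eight summands below are precisely the full `ℤ₂`-orbit of the generating
components; the summands cancel in pairs when `i = j`.) -/
def RM (s : ℕ) (x y z w : Vc s) : ℝ :=
  ∑ i, ∑ j,
    (x (uI i) * y (uI j) * z (uI j) * w (tI i)
     - x (uI j) * y (uI i) * z (uI j) * w (tI i)
     - x (uI i) * y (uI j) * z (tI i) * w (uI j)
     + x (uI j) * y (uI i) * z (tI i) * w (uI j)
     + x (uI j) * y (tI i) * z (uI i) * w (uI j)
     - x (tI i) * y (uI j) * z (uI i) * w (uI j)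
     - x (uI j) * y (tI i) * z (uI j) * w (uI i)
     + x (tI i) * y (uI j) * z (uI j) * w (uI i))

/-- `Z_i^+ = U_i + (1/2) V_i`. -/
def Zp {s : ℕ} (i : Fin s) : Vc s := Uv i + (2⁻¹ : ℝ) • Vv i
/-- `Z_i^- = U_i - (1/2) V_i`. -/
def Zm {s : ℕ} (i : Fin s) : Vc s := Uv i - (2⁻¹ : ℝ) • Vv i

/- In the theorems below, the Jacobi operator is taken as a function
`J : ℝ^{3s} → End(ℝ^{3s})` together with the hypothesis that it satisfies its defining
property `g(J(x)y, w) = R(y,x,x,w)` for all `x, y, w`; since `g` is nondegenerate this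
characterizes `J` uniquely. -/

section AuxOss
variable {s : ℕ}

@[simp] lemma oss_u_u (m i : Fin s) : (Uv m) (uI i) = if i = m then 1 else 0 := by
  rcases eq_or_ne i m with h | h
  · subst h; simp [Uv]
  · rw [Uv, Pi.single_eq_of_ne (by simp [uI, h]), if_neg h]
@[simp] lemma oss_u_t (m i : Fin s) : (Uv m) (tI i) = 0 := by
  rw [Uv, Pi.single_eq_of_ne (by simp [uI, tI])]
@[simp] lemma oss_u_v (m i : Fin s) : (Uv m) (vI i) = 0 := by
  rw [Uv, Pi.single_eq_of_ne (by simp [uI, vI])]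
@[simp] lemma oss_t_u (m i : Fin s) : (Tv m) (uI i) = 0 := by
  rw [Tv, Pi.single_eq_of_ne (by simp [uI, tI])]
@[simp] lemma oss_t_t (m i : Fin s) : (Tv m) (tI i) = if i = m then 1 else 0 := by
  rcases eq_or_ne i m with h | h
  · subst h; simp [Tv]
  · rw [Tv, Pi.single_eq_of_ne (by simp [tI, h]), if_neg h]
@[simp] lemma oss_t_v (m i : Fin s) : (Tv m) (vI i) = 0 := by
  rw [Tv, Pi.single_eq_of_ne (by simp [tI, vI])]
@[simp] lemma oss_v_u (m i : Fin s) : (Vv m) (uI i) = 0 := by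
  rw [Vv, Pi.single_eq_of_ne (by simp [uI, vI])]
@[simp] lemma oss_v_t (m i : Fin s) : (Vv m) (tI i) = 0 := by
  rw [Vv, Pi.single_eq_of_ne (by simp [tI, vI])]
@[simp] lemma oss_v_v (m i : Fin s) : (Vv m) (vI i) = if i = m then 1 else 0 := by
  rcases eq_or_ne i m with h | h
  · subst h; simp [Vv]
  · rw [Vv, Pi.single_eq_of_ne (by simp [vI, h]), if_neg h]

lemma oss_gM_Vv (z : Vc s) (m : Fin s) : gM s z (Vv m) = z (uI m) := by
  simp [gM, Finset.sum_ite_eq', Finset.mem_univ]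
lemma oss_gM_Uv (z : Vc s) (m : Fin s) : gM s z (Uv m) = z (vI m) := by
  simp [gM, Finset.sum_ite_eq', Finset.mem_univ]
lemma oss_gM_Tv (z : Vc s) (m : Fin s) : gM s z (Tv m) = -z (tI m) := by
  simp [gM, Finset.sum_ite_eq', Finset.mem_univ]

lemma oss_sum_ite_right (m : Fin s) (g : Fin s → Fin s → ℝ) :
    (∑ i, ∑ j, g i j * (if j = m then (1:ℝ) else 0)) = ∑ i, g i m := by
  refine Finset.sum_congr rfl fun i _ => ?_
  simp [mul_ite, Finset.sum_ite_eq', Finset.mem_univ]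

lemma oss_sum_ite_left (m : Fin s) (g : Fin s → Fin s → ℝ) :
    (∑ i, ∑ j, g i j * (if i = m then (1:ℝ) else 0)) = ∑ j, g m j := by
  rw [Finset.sum_comm]; exact oss_sum_ite_right m fun j i => g i j

lemma oss_RM_Vv (x y : Vc s) (m : Fin s) : RM s y x x (Vv m) = 0 := by
  simp [RM]

lemma oss_RM_Tv (x y : Vc s) (m : Fin s) :
    RM s y x x (Tv m)
      = y (uI m) * (∑ j, x (uI j)^2) - x (uI m) * (∑ j, x (uI j) * y (uI j)) := by
  have h : RM s y x x (Tv m)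
      = ∑ i, ∑ j, (y (uI i) * x (uI j) * x (uI j) - y (uI j) * x (uI i) * x (uI j))
          * (if i = m then (1:ℝ) else 0) := by
    simp only [RM, oss_t_t, oss_t_u, mul_zero, add_zero, sub_zero, zero_sub, neg_zero,
      zero_add]
    exact Finset.sum_congr rfl fun i _ => Finset.sum_congr rfl fun j _ => by ring
  rw [h, oss_sum_ite_left, Finset.mul_sum, Finset.mul_sum, ← Finset.sum_sub_distrib]
  exact Finset.sum_congr rfl fun j _ => by ring

lemma oss_RM_Uv (x y : Vc s) (m : Fin s) :
    RM s y x x (Uv m)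
      = - x (uI m) * (∑ i, (x (tI i) * y (uI i) + x (uI i) * y (tI i)))
        + 2 * y (uI m) * (∑ i, x (uI i) * x (tI i))
        - x (tI m) * (∑ i, x (uI i) * y (uI i))
        + y (tI m) * (∑ i, x (uI i)^2) := by
  have h : RM s y x x (Uv m)
      = (∑ i, ∑ j, (- (y (uI i) * x (uI j) * x (tI i)) + y (uI j) * x (uI i) * x (tI i)
            + y (uI j) * x (tI i) * x (uI i) - y (tI i) * x (uI j) * x (uI i))
          * (if j = m then (1:ℝ) else 0))
        + (∑ i, ∑ j, (- (y (uI j) * x (tI i) * x (uI j)) + y (tI i) * x (uI j) * x (uI j))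
          * (if i = m then (1:ℝ) else 0)) := by
    rw [← Finset.sum_add_distrib]
    refine Finset.sum_congr rfl fun i _ => ?_
    rw [← Finset.sum_add_distrib]
    refine Finset.sum_congr rfl fun j _ => ?_
    simp only [RM, oss_u_u, oss_u_t, mul_zero]
    ring
  rw [h, oss_sum_ite_right, oss_sum_ite_left, Finset.mul_sum, Finset.mul_sum, Finset.mul_sum,
    Finset.mul_sum]
  rw [← Finset.sum_add_distrib, ← Finset.sum_add_distrib, ← Finset.sum_sub_distrib,
    ← Finset.sum_add_distrib]
  exact Finset.sum_congr rfl fun i _ => by ring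

variable {J : Vc s → Module.End ℝ (Vc s)}

lemma oss_J_u (hJ : ∀ x y w : Vc s, gM s (J x y) w = RM s y x x w) (x y : Vc s) (m : Fin s) : J x y (uI m) = 0 := by
  have h := hJ x y (Vv m); rw [oss_gM_Vv] at h; rw [h, oss_RM_Vv]

lemma oss_J_t (hJ : ∀ x y w : Vc s, gM s (J x y) w = RM s y x x w) (x y : Vc s) (m : Fin s) :
    J x y (tI m) = x (uI m) * (∑ j, x (uI j) * y (uI j)) - y (uI m) * (∑ j, x (uI j)^2) := by
  have h := hJ x y (Tv m); rw [oss_gM_Tv, oss_RM_Tv] at h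
  linarith [h]

lemma oss_J_v (hJ : ∀ x y w : Vc s, gM s (J x y) w = RM s y x x w) (x y : Vc s) (m : Fin s) :
    J x y (vI m)
      = - x (uI m) * (∑ i, (x (tI i) * y (uI i) + x (uI i) * y (tI i)))
        + 2 * y (uI m) * (∑ i, x (uI i) * x (tI i))
        - x (tI m) * (∑ i, x (uI i) * y (uI i))
        + y (tI m) * (∑ i, x (uI i)^2) := by
  have h := hJ x y (Uv m); rw [oss_gM_Uv, oss_RM_Uv] at h; exact h

end AuxOss
section AuxOss2
variable {s k : ℕ}

def CMat (X : Fin k → Vc s) : Matrix (Fin s) (Fin s) ℝ :=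
  Matrix.of fun i j => (∑ a, X a (uI i) * X a (uI j))
    - (if i = j then (∑ a, ∑ l, X a (uI l)^2) else 0)

def DMat (X : Fin k → Vc s) : Matrix (Fin s) (Fin s) ℝ :=
  Matrix.of fun i j => (if i = j then 2 * ∑ a, ∑ l, X a (uI l) * X a (tI l) else 0)
    - (∑ a, (X a (uI i) * X a (tI j) + X a (tI i) * X a (uI j)))

lemma CMat_mulVec (X : Fin k → Vc s) (v : Fin s → ℝ) (m : Fin s) :
    (CMat X).mulVec v m
      = ∑ a, (X a (uI m) * (∑ j, X a (uI j) * v j) - v m * (∑ j, X a (uI j)^2)) := by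
  simp only [CMat, Matrix.mulVec, dotProduct, Matrix.of_apply, sub_mul, ite_mul,
    zero_mul, Finset.sum_sub_distrib, Finset.sum_ite_eq, Finset.mem_univ, if_true]
  congr 1
  · simp only [Finset.sum_mul]
    rw [Finset.sum_comm]
    refine Finset.sum_congr rfl fun a _ => ?_
    rw [Finset.mul_sum]
    exact Finset.sum_congr rfl fun j _ => by ring
  · rw [Finset.sum_mul]
    exact Finset.sum_congr rfl fun a _ => by
      simp only [Finset.mul_sum, Finset.sum_mul]
      exact Finset.sum_congr rfl fun j _ => by ring

lemma DMat_mulVec (X : Fin k → Vc s) (v : Fin s → ℝ) (m : Fin s) :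
    (DMat X).mulVec v m
      = ∑ a, (2 * v m * (∑ l, X a (uI l) * X a (tI l))
          - (X a (uI m) * (∑ j, X a (tI j) * v j) + X a (tI m) * (∑ j, X a (uI j) * v j))) := by
  simp only [DMat, Matrix.mulVec, dotProduct, Matrix.of_apply, sub_mul, ite_mul,
    zero_mul, Finset.sum_sub_distrib, Finset.sum_ite_eq, Finset.mem_univ, if_true]
  congr 1
  · rw [Finset.mul_sum, Finset.sum_mul]
    exact Finset.sum_congr rfl fun a _ => by ring
  · simp only [Finset.sum_mul, add_mul]
    rw [Finset.sum_comm]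
    refine Finset.sum_congr rfl fun a _ => ?_
    rw [Finset.sum_add_distrib, Finset.mul_sum, Finset.mul_sum]
    congr 1
    · exact Finset.sum_congr rfl fun j _ => by ring
    · exact Finset.sum_congr rfl fun j _ => by ring

end AuxOss2
section AuxOss3
variable {s k : ℕ} {J : Vc s → Module.End ℝ (Vc s)}

lemma oss_sumJ_apply (X : Fin k → Vc s) (y : Vc s) (idx : Ix s) :
    (∑ a, J (X a)) y idx = ∑ a, J (X a) y idx := by
  simp [LinearMap.sum_apply, Finset.sum_apply]

lemma oss_sumJ_u (hJ : ∀ x y w : Vc s, gM s (J x y) w = RM s y x x w)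
    (X : Fin k → Vc s) (y : Vc s) (m : Fin s) :
    (∑ a, J (X a)) y (uI m) = 0 := by
  rw [oss_sumJ_apply]
  exact Finset.sum_eq_zero fun a _ => oss_J_u hJ _ _ _

lemma oss_sumJ_t (hJ : ∀ x y w : Vc s, gM s (J x y) w = RM s y x x w)
    (X : Fin k → Vc s) (y : Vc s) (m : Fin s) :
    (∑ a, J (X a)) y (tI m) = (CMat X).mulVec (fun i => y (uI i)) m := by
  rw [oss_sumJ_apply, CMat_mulVec]
  exact Finset.sum_congr rfl fun a _ => oss_J_t hJ _ _ _

lemma oss_sumJ_v (hJ : ∀ x y w : Vc s, gM s (J x y) w = RM s y x x w)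
    (X : Fin k → Vc s) (y : Vc s) (m : Fin s) :
    (∑ a, J (X a)) y (vI m)
      = (DMat X).mulVec (fun i => y (uI i)) m - (CMat X).mulVec (fun i => y (tI i)) m := by
  rw [oss_sumJ_apply, CMat_mulVec, DMat_mulVec, ← Finset.sum_sub_distrib]
  refine Finset.sum_congr rfl fun a _ => ?_
  rw [oss_J_v hJ, Finset.sum_add_distrib]
  ring

/-- The canonical nilpotent operator `(yu, yt, yv) ↦ (0, yu, -yt)`. -/
def NL (s : ℕ) : Vc s →ₗ[ℝ] Vc s where
  toFun y := Sum.elim (fun _ => (0:ℝ)) (Sum.elim (fun m => y (uI m)) (fun m => - y (tI m)))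
  map_add' a b := by
    funext idx; rcases idx with m | m | m <;> simp [uI, tI] <;> ring
  map_smul' r a := by
    funext idx; rcases idx with m | m | m <;> simp [uI, tI] <;> ring

@[simp] lemma NL_u (y : Vc s) (m : Fin s) : NL s y (uI m) = 0 := rfl
@[simp] lemma NL_t (y : Vc s) (m : Fin s) : NL s y (tI m) = y (uI m) := rfl
@[simp] lemma NL_v (y : Vc s) (m : Fin s) : NL s y (vI m) = - y (tI m) := rfl

/-- The block lower-triangular map `(yu, yt, yv) ↦ (yu, C yt, D yt + C² yv)`. -/
def PL (X : Fin k → Vc s) : Vc s →ₗ[ℝ] Vc s where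
  toFun y := Sum.elim (fun m => y (uI m))
    (Sum.elim (fun m => (CMat X).mulVec (fun i => y (tI i)) m)
      (fun m => (DMat X).mulVec (fun i => y (tI i)) m
        + ((CMat X) * (CMat X)).mulVec (fun i => y (vI i)) m))
  map_add' a b := by
    funext idx
    rcases idx with m | m | m <;>
      simp [uI, tI, Matrix.mulVec, dotProduct, mul_add, Finset.sum_add_distrib] <;> ring
  map_smul' r a := by
    funext idx
    rcases idx with m | m | m
    · simp [uI]
    · simp only [Sum.elim_inl, Sum.elim_inr, Matrix.mulVec, dotProduct,
        Pi.smul_apply, smul_eq_mul, RingHom.id_apply, Finset.mul_sum, tI]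
      exact Finset.sum_congr rfl fun j _ => by ring
    · simp only [Sum.elim_inl, Sum.elim_inr, Matrix.mulVec, dotProduct,
        Pi.smul_apply, smul_eq_mul, RingHom.id_apply, mul_add, Finset.mul_sum, tI, vI]
      congr 1 <;> exact Finset.sum_congr rfl fun j _ => by ring

@[simp] lemma PL_u (X : Fin k → Vc s) (y : Vc s) (m : Fin s) :
    PL X y (uI m) = y (uI m) := rfl
@[simp] lemma PL_t (X : Fin k → Vc s) (y : Vc s) (m : Fin s) :
    PL X y (tI m) = (CMat X).mulVec (fun i => y (tI i)) m := rfl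
@[simp] lemma PL_v (X : Fin k → Vc s) (y : Vc s) (m : Fin s) :
    PL X y (vI m) = (DMat X).mulVec (fun i => y (tI i)) m
      + ((CMat X) * (CMat X)).mulVec (fun i => y (vI i)) m := rfl

end AuxOss3
section AuxOss4
variable {s k : ℕ}

lemma oss_C_inj (hk2 : s + 2 ≤ k) (X : Fin k → Vc s)
    (hX : ∀ a b, gM s (X a) (X b) = if a = b then -1 else 0)
    (v : Fin s → ℝ) (hv : (CMat X).mulVec v = 0) : v = 0 := by
  by_contra hne
  obtain ⟨i0, hi0⟩ : ∃ i, v i ≠ 0 := by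
    by_contra h; push_neg at h; exact hne (funext h)
  have hnv : 0 < ∑ i, v i ^ 2 :=
    Finset.sum_pos' (fun i _ => sq_nonneg _) ⟨i0, Finset.mem_univ _, by positivity⟩
  -- step A : M v = (tr M) v
  have hMv : ∀ m, (∑ a, X a (uI m) * (∑ j, X a (uI j) * v j))
      = (∑ a, ∑ l, X a (uI l)^2) * v m := by
    intro m
    have h := congrFun hv m
    rw [CMat_mulVec, Pi.zero_apply, Finset.sum_sub_distrib, sub_eq_zero] at h
    rw [h, Finset.sum_mul]
    exact Finset.sum_congr rfl fun a _ => by ring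
  -- step B : ∑ p a ^ 2 = tr M * |v|²
  have hB : (∑ a, (∑ j, X a (uI j) * v j)^2)
      = (∑ a, ∑ l, X a (uI l)^2) * (∑ i, v i^2) := by
    calc (∑ a, (∑ j, X a (uI j) * v j)^2)
        = ∑ a, ∑ m, (X a (uI m) * (∑ j, X a (uI j) * v j)) * v m := by
          refine Finset.sum_congr rfl fun a _ => ?_
          rw [pow_two, Finset.sum_mul]
          exact Finset.sum_congr rfl fun m _ => by ring
      _ = ∑ m, (∑ a, X a (uI m) * (∑ j, X a (uI j) * v j)) * v m := by
          rw [Finset.sum_comm]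
          exact Finset.sum_congr rfl fun m _ => by rw [Finset.sum_mul]
      _ = ∑ m, ((∑ a, ∑ l, X a (uI l)^2) * v m) * v m :=
          Finset.sum_congr rfl fun m _ => by rw [hMv m]
      _ = (∑ a, ∑ l, X a (uI l)^2) * (∑ i, v i^2) := by
          rw [Finset.mul_sum]
          exact Finset.sum_congr rfl fun m _ => by ring
  -- step C : all u-parts are proportional to v
  have expand : ∀ a, (∑ i, ((∑ l, v l^2) * X a (uI i) - (∑ j, X a (uI j) * v j) * v i)^2)
      = (∑ l, v l^2)^2 * (∑ i, X a (uI i)^2) - (∑ l, v l^2) * (∑ j, X a (uI j) * v j)^2 := by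
    intro a
    rw [Finset.sum_congr rfl fun i _ => show ((∑ l, v l^2) * X a (uI i) - (∑ j, X a (uI j) * v j) * v i)^2
      = (∑ l, v l^2)^2 * X a (uI i)^2
        - 2*(∑ l, v l^2)*(∑ j, X a (uI j) * v j)*(X a (uI i) * v i)
        + (∑ j, X a (uI j) * v j)^2 * v i^2 from by ring]
    rw [Finset.sum_add_distrib, Finset.sum_sub_distrib, ← Finset.mul_sum, ← Finset.mul_sum,
      ← Finset.mul_sum]
    ring
  have hzero : ∑ a, (∑ i, ((∑ l, v l^2) * X a (uI i) - (∑ j, X a (uI j) * v j) * v i)^2) = 0 := by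
    rw [Finset.sum_congr rfl fun a _ => expand a, Finset.sum_sub_distrib, ← Finset.mul_sum,
      ← Finset.mul_sum, hB]
    ring
  have hterm : ∀ a i, (∑ l, v l^2) * X a (uI i) = (∑ j, X a (uI j) * v j) * v i := by
    intro a i
    have h1 := (Finset.sum_eq_zero_iff_of_nonneg
      (fun a _ => Finset.sum_nonneg fun i _ => sq_nonneg _)).mp hzero a (Finset.mem_univ _)
    have h2 := (Finset.sum_eq_zero_iff_of_nonneg
      (fun i _ => sq_nonneg _)).mp h1 i (Finset.mem_univ _)
    have h3 := (pow_eq_zero_iff (two_ne_zero)).mp h2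
    linarith
  have hw : ∀ a i, X a (uI i) = ((∑ j, X a (uI j) * v j) / (∑ l, v l^2)) * v i := by
    intro a i
    rw [div_mul_eq_mul_div, eq_div_iff hnv.ne']
    linarith [hterm a i]
  -- step D : Gram identity for the t-parts
  obtain ⟨c, β, hG⟩ : ∃ c β : Fin k → ℝ, ∀ a b, (∑ i, X a (tI i) * X b (tI i))
      = (if a = b then 1 else 0) + c a * β b + c b * β a := by
    refine ⟨fun a => (∑ j, X a (uI j) * v j) / (∑ l, v l^2),
      fun a => ∑ i, v i * X a (vI i), fun a b => ?_⟩
    have h := hX a b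
    rw [gM, Finset.sum_congr rfl fun i _ =>
      show X a (uI i) * X b (vI i) + X a (vI i) * X b (uI i) - X a (tI i) * X b (tI i)
        = ((∑ j, X a (uI j) * v j) / (∑ l, v l^2)) * (v i * X b (vI i))
          + ((∑ j, X b (uI j) * v j) / (∑ l, v l^2)) * (v i * X a (vI i))
          - X a (tI i) * X b (tI i) from by rw [hw a i, hw b i]; ring] at h
    rw [Finset.sum_sub_distrib, Finset.sum_add_distrib, ← Finset.mul_sum, ← Finset.mul_sum] at h
    split_ifs at h ⊢ <;> linarith
  -- step E : kernel computation helper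
  have hker : ∀ x : Fin k → ℝ, (∀ i, ∑ a, x a * X a (tI i) = 0) →
      ∀ b, x b + β b * (∑ a, x a * c a) + c b * (∑ a, x a * β a) = 0 := by
    intro x hx b
    have h0 : ∑ i, X b (tI i) * (∑ a, x a * X a (tI i)) = 0 :=
      Finset.sum_eq_zero fun i _ => by rw [hx i, mul_zero]
    have h1 : ∑ i, X b (tI i) * (∑ a, x a * X a (tI i))
        = ∑ a, x a * (∑ i, X b (tI i) * X a (tI i)) := by
      simp only [Finset.mul_sum]
      rw [Finset.sum_comm]
      exact Finset.sum_congr rfl fun a _ =>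
        Finset.sum_congr rfl fun i _ => by ring
    rw [h1, Finset.sum_congr rfl fun a _ => show x a * (∑ i, X b (tI i) * X a (tI i))
        = x a * (if b = a then 1 else 0) + (c b * (x a * β a)) + (β b * (x a * c a)) from by
          rw [hG b a]; ring,
      Finset.sum_add_distrib, Finset.sum_add_distrib, ← Finset.mul_sum, ← Finset.mul_sum] at h0
    have h3 : ∑ a, x a * (if b = a then (1:ℝ) else 0) = x b := by
      simp [mul_ite, Finset.sum_ite_eq, Finset.mem_univ]
    rw [h3] at h0
    linarith
  -- step F : the injective linear map into ℝ^{s+2}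
  let L : (Fin k → ℝ) →ₗ[ℝ] ((Fin s → ℝ) × ℝ × ℝ) :=
  { toFun := fun x => (fun i => ∑ a, x a * X a (tI i), ∑ a, x a * β a, ∑ a, x a * c a)
    map_add' := fun x y => by
      refine Prod.ext ?_ (Prod.ext ?_ ?_)
      · funext i
        show (∑ a, (x a + y a) * X a (tI i)) = _ + _
        simp [add_mul, Finset.sum_add_distrib]
      · show (∑ a, (x a + y a) * β a) = _
        simp [Prod.snd_add, Prod.fst_add, add_mul, Finset.sum_add_distrib]
      · show (∑ a, (x a + y a) * c a) = _
        simp [Prod.snd_add, add_mul, Finset.sum_add_distrib]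
    map_smul' := fun r x => by
      refine Prod.ext ?_ (Prod.ext ?_ ?_)
      · funext i
        show (∑ a, (r * x a) * X a (tI i)) = ((r • _ : (Fin s → ℝ) × ℝ × ℝ)).1 i
        simp only [Prod.smul_fst, Pi.smul_apply, smul_eq_mul, Finset.mul_sum]
        exact Finset.sum_congr rfl fun a _ => by ring
      · show (∑ a, (r * x a) * β a) = ((r • _ : (Fin s → ℝ) × ℝ × ℝ)).2.1
        simp only [Prod.smul_snd, Prod.smul_fst, smul_eq_mul, Finset.mul_sum]
        exact Finset.sum_congr rfl fun a _ => by ring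
      · show (∑ a, (r * x a) * c a) = ((r • _ : (Fin s → ℝ) × ℝ × ℝ)).2.2
        simp only [Prod.smul_snd, smul_eq_mul, Finset.mul_sum]
        exact Finset.sum_congr rfl fun a _ => by ring }
  have hL1 : ∀ x : Fin k → ℝ, ∀ i, (L x).1 i = ∑ a, x a * X a (tI i) := fun _ _ => rfl
  have hL21 : ∀ x : Fin k → ℝ, (L x).2.1 = ∑ a, x a * β a := fun _ => rfl
  have hL22 : ∀ x : Fin k → ℝ, (L x).2.2 = ∑ a, x a * c a := fun _ => rfl
  have hLinj : Function.Injective L := by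
    have h0 : ∀ x, L x = 0 → x = 0 := by
      intro x hx
      have hT : ∀ i, ∑ a, x a * X a (tI i) = 0 := by
        intro i
        rw [← hL1 x i, hx]; rfl
      have hb : (∑ a, x a * β a) = 0 := by rw [← hL21 x, hx]; rfl
      have hc : (∑ a, x a * c a) = 0 := by rw [← hL22 x, hx]; rfl
      funext b
      have := hker x hT b
      rw [hb, hc] at this
      simpa using by linarith
    intro x y hxy
    have : L (x - y) = 0 := by rw [map_sub, hxy, sub_self]
    exact sub_eq_zero.mp (h0 _ this)
  have hdim1 : Module.finrank ℝ (Fin k → ℝ) = k := by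
    simp [Module.finrank_fintype_fun_eq_card]
  have hdim2 : Module.finrank ℝ ((Fin s → ℝ) × ℝ × ℝ) = s + 2 := by
    simp [Module.finrank_prod, Module.finrank_self, Module.finrank_fintype_fun_eq_card]
  have hrange : LinearMap.range L = ⊤ := by
    apply Submodule.eq_top_of_finrank_eq
    rw [LinearMap.finrank_range_of_inj hLinj, hdim1, hdim2]
    have hk' : k ≤ s + 2 := by
      have := LinearMap.finrank_le_finrank_of_injective hLinj
      rwa [hdim1, hdim2] at this
    omega
  obtain ⟨x, hxL⟩ : ∃ x, L x = (0, 0, 1) := by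
    have : ((0, 0, 1) : (Fin s → ℝ) × ℝ × ℝ) ∈ LinearMap.range L := by
      rw [hrange]; trivial
    exact this
  have hxT : ∀ i, ∑ a, x a * X a (tI i) = 0 := by
    intro i
    rw [← hL1 x i, hxL]; rfl
  have hxβ : (∑ a, x a * β a) = 0 := by rw [← hL21 x, hxL]
  have hxc : (∑ a, x a * c a) = 1 := by rw [← hL22 x, hxL]
  have hxb : ∀ b, x b = - β b := by
    intro b
    have := hker x hxT b
    rw [hxβ, hxc] at this
    linarith
  have hβ2 : ∑ a, β a ^ 2 = 0 := by
    have h : ∑ a, x a * β a = ∑ a, -(β a^2) :=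
      Finset.sum_congr rfl fun a _ => by rw [hxb a]; ring
    rw [h, Finset.sum_neg_distrib, neg_eq_zero] at hxβ
    exact hxβ
  have hβ0 : ∀ b, β b = 0 := by
    intro b
    have := (Finset.sum_eq_zero_iff_of_nonneg (fun a _ => sq_nonneg _)).mp hβ2 b (Finset.mem_univ _)
    exact (pow_eq_zero_iff two_ne_zero).mp this
  have : (1:ℝ) = 0 := by
    rw [← hxc]
    refine Finset.sum_eq_zero fun a _ => ?_
    rw [hxb a, hβ0 a]; ring
  norm_num at this

end AuxOss4
section AuxOss5
variable {s k : ℕ} {J : Vc s → Module.End ℝ (Vc s)}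

lemma oss_exists_equiv (hJ : ∀ x y w : Vc s, gM s (J x y) w = RM s y x x w)
    (hk2 : s + 2 ≤ k) (X : Fin k → Vc s)
    (hX : ∀ a b, gM s (X a) (X b) = if a = b then -1 else 0) :
    ∃ P : Vc s ≃ₗ[ℝ] Vc s, ∀ z : Vc s, (∑ a, J (X a)) (P z) = P (NL s z) := by
  have hC := oss_C_inj hk2 X hX
  have hPinj : Function.Injective (PL X) := by
    have h0 : ∀ y : Vc s, PL X y = 0 → y = 0 := by
      intro y hy
      have hu : ∀ m, y (uI m) = 0 := fun m => by
        have := congrFun hy (uI m); simpa using this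
      have ht0 : (fun i => y (tI i)) = 0 := by
        apply hC
        funext m
        have := congrFun hy (tI m)
        simpa using this
      have ht : ∀ m, y (tI m) = 0 := fun m => congrFun ht0 m
      have h2 : ((CMat X) * (CMat X)).mulVec (fun i => y (vI i)) = 0 := by
        funext m
        have h1 := congrFun hy (vI m)
        have h1' : (DMat X).mulVec (fun i => y (tI i)) m
            + ((CMat X) * (CMat X)).mulVec (fun i => y (vI i)) m = 0 := by simpa using h1
        rw [ht0, Matrix.mulVec_zero] at h1'
        simpa using h1'
      have h3 : (CMat X).mulVec ((CMat X).mulVec (fun i => y (vI i))) = 0 := by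
        rw [Matrix.mulVec_mulVec]; exact h2
      have hv0 : (fun i => y (vI i)) = 0 := hC _ (hC _ h3)
      funext idx
      rcases idx with m | m | m
      exacts [hu m, ht m, congrFun hv0 m]
    intro a b hab
    have : PL X (a - b) = 0 := by rw [map_sub, hab, sub_self]
    exact sub_eq_zero.mp (h0 _ this)
  have hPbij : Function.Bijective (PL X) :=
    ⟨hPinj, LinearMap.injective_iff_surjective.mp hPinj⟩
  refine ⟨LinearEquiv.ofBijective (PL X) hPbij, fun z => ?_⟩
  have hcoe : ∀ u, (LinearEquiv.ofBijective (PL X) hPbij) u = PL X u := fun _ => rfl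
  rw [hcoe, hcoe]
  funext idx
  rcases idx with m | m | m
  · rw [show (Sum.inl m : Ix s) = uI m from rfl, oss_sumJ_u hJ]
    exact (PL_u X (NL s z) m ▸ (NL_u z m).symm)
  · rw [show (Sum.inr (Sum.inl m) : Ix s) = tI m from rfl, oss_sumJ_t hJ]
    simp only [PL_t, PL_u, NL_t]
  · rw [show (Sum.inr (Sum.inr m) : Ix s) = vI m from rfl, oss_sumJ_v hJ]
    simp only [PL_v, PL_u, PL_t, NL_t, NL_v]
    have hneg : (fun i => -(z (tI i))) = -(fun i => z (tI i)) := rfl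
    rw [hneg, Matrix.mulVec_neg, Matrix.mulVec_mulVec]
    simp [sub_eq_add_neg]

end AuxOss5


/-- the model space is `k`-timelike higher order Jordan Osserman for
`s + 2 ≤ k ≤ 2s`: for any two timelike orthonormal `k`-families `X` and `Y`, the
operators `Σ_a J(X_a)` and `Σ_a J(Y_a)` are similar. -/
theorem stmt10 (s : ℕ) (hs : 2 ≤ s)
    (J : Vc s → Module.End ℝ (Vc s))
    (hJ : ∀ x y w : Vc s, gM s (J x y) w = RM s y x x w)
    (k : ℕ) (hk2 : s + 2 ≤ k) (hks : k ≤ 2 * s)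
    (X Y : Fin k → Vc s)
    (hX : ∀ a b, gM s (X a) (X b) = if a = b then -1 else 0)
    (hY : ∀ a b, gM s (Y a) (Y b) = if a = b then -1 else 0) :
    ∃ P : Vc s ≃ₗ[ℝ] Vc s, ∀ y : Vc s,
      (∑ a, J (Y a)) y = P ((∑ a, J (X a)) (P.symm y)) := by
  obtain ⟨PX, hPX⟩ := oss_exists_equiv hJ hk2 X hX
  obtain ⟨PY, hPY⟩ := oss_exists_equiv hJ hk2 Y hY
  refine ⟨PX.symm.trans PY, fun y => ?_⟩
  have h1 : (PX.symm.trans PY).symm y = PX (PY.symm y) := by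
    rw [LinearEquiv.symm_trans_apply]; simp
  rw [h1, hPX (PY.symm y)]
  have h2 : (PX.symm.trans PY) (PX (NL s (PY.symm y))) = PY (NL s (PY.symm y)) := by
    rw [LinearEquiv.trans_apply]; simp
  rw [h2, ← hPY (PY.symm y), LinearEquiv.apply_symm_apply]
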